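/- Let φ ∈ 𝒪ₙ with φ(0) = 0 and μ(φ) < ∞ define the isolated hypersurface singularity (X,0) = (φ⁻¹(0),0), and let p(x) = a₁x₁ + ⋯ + aₙxₙ be a non-zero linear function with μ_BR(p,X) < ∞. Then the polar multiplicity m_{n−1}(X,0) = dim_ℂ 𝒪ₙ/(⟨φ⟩ + J(p,φ)) satisfies m_{n−1}(X,0) = μ_BR(p,X) + τ(X,0). -/
import Mathlib


set_option maxHeartbeats 1000000
set_option synthInstance.maxHeartbeats 400000

open Filter Topology Module

noncomputable section

namespace BR

variable {α : Type*} (l : Filter α)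

instance germAlgebra : Algebra ℂ ((l : Filter α).Germ ℂ) :=
  Algebra.ofModule
    (fun r x y => Filter.Germ.inductionOn₂ x y fun f g => by
      rw [← Filter.Germ.coe_smul, ← Filter.Germ.coe_mul, ← Filter.Germ.coe_mul,
        ← Filter.Germ.coe_smul, smul_mul_assoc])
    (fun r x y => Filter.Germ.inductionOn₂ x y fun f g => by
      rw [← Filter.Germ.coe_smul, ← Filter.Germ.coe_mul, ← Filter.Germ.coe_mul,
        ← Filter.Germ.coe_smul, mul_smul_comm])

/-- A germ at `0` is holomorphic if it has a representative which is analytic at `0`. -/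
def IsHolGerm (n : ℕ) (g : (𝓝 (0 : Fin n → ℂ)).Germ ℂ) : Prop :=
  ∃ f : (Fin n → ℂ) → ℂ, AnalyticAt ℂ f 0 ∧ (↑f : (𝓝 (0 : Fin n → ℂ)).Germ ℂ) = g

/-- `𝒪ₙ`, the local ring of germs at `0` of holomorphic functions `(ℂⁿ,0) → ℂ`,
realized as the subalgebra of all germs at `0` of `ℂ`-valued functions consisting of
those germs admitting an analytic representative. -/
def Osub (n : ℕ) : Subalgebra ℂ ((𝓝 (0 : Fin n → ℂ)).Germ ℂ) where
  carrier := {g | IsHolGerm n g}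
  add_mem' := by
    rintro a b ⟨f, hf, rfl⟩ ⟨g, hg, rfl⟩
    exact ⟨f + g, hf.add hg, (Filter.Germ.coe_add _ _)⟩
  mul_mem' := by
    rintro a b ⟨f, hf, rfl⟩ ⟨g, hg, rfl⟩
    exact ⟨f * g, hf.mul hg, (Filter.Germ.coe_mul _ _)⟩
  algebraMap_mem' := fun c => ⟨fun _ => c, analyticAt_const, by
    rw [Algebra.algebraMap_eq_smul_one, ← Filter.Germ.coe_one, ← Filter.Germ.coe_smul]
    congr 1; funext x; simp⟩

/-- The ring `𝒪ₙ` of holomorphic germs `(ℂⁿ,0) → ℂ`. -/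
def O (n : ℕ) : Type := ↥(Osub n)

instance (n : ℕ) : CommRing (O n) := inferInstanceAs (CommRing ↥(Osub n))
instance (n : ℕ) : Algebra ℂ (O n) := inferInstanceAs (Algebra ℂ ↥(Osub n))

variable {n : ℕ}

/-- The germ underlying an element of `𝒪ₙ`. -/
def toGerm (g : O n) : (𝓝 (0 : Fin n → ℂ)).Germ ℂ := (show ↥(Osub n) from g).1

lemma isHolGerm (g : O n) : IsHolGerm n (toGerm g) := (show ↥(Osub n) from g).2

/-- The element of `𝒪ₙ` determined by a function analytic at `0`. -/
def mk (f : (Fin n → ℂ) → ℂ) (hf : AnalyticAt ℂ f 0) : O n :=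
  show ↥(Osub n) from ⟨(↑f : (𝓝 (0 : Fin n → ℂ)).Germ ℂ), f, hf, rfl⟩

lemma toGerm_mk (f : (Fin n → ℂ) → ℂ) (hf : AnalyticAt ℂ f 0) :
    toGerm (mk f hf) = (↑f : (𝓝 (0 : Fin n → ℂ)).Germ ℂ) := rfl

/-- A chosen analytic representative of a holomorphic germ. -/
def rep (g : O n) : (Fin n → ℂ) → ℂ := (isHolGerm g).choose

lemma rep_analyticAt (g : O n) : AnalyticAt ℂ (rep g) 0 := (isHolGerm g).choose_spec.1

lemma rep_spec (g : O n) : (↑(rep g) : (𝓝 (0 : Fin n → ℂ)).Germ ℂ) = toGerm g :=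
  (isHolGerm g).choose_spec.2

/-- The value at the origin of a holomorphic germ. -/
def value (g : O n) : ℂ :=
  Filter.Germ.liftOn (toGerm g) (fun f => f 0) fun _ _ h => h.eq_of_nhds

/-- The partial derivative `∂g/∂xᵢ` of a holomorphic germ `g ∈ 𝒪ₙ`. -/
def pd (i : Fin n) (g : O n) : O n :=
  mk (fun x => fderiv ℂ (rep g) x (Pi.single i 1))
    (by
      have h1 : AnalyticAt ℂ (fderiv ℂ (rep g)) 0 := (rep_analyticAt g).fderiv
      exact ((ContinuousLinearMap.apply ℂ ℂ (Pi.single i 1)).analyticAt _).comp h1)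

/-- The evaluation `ξ ↦ df(ξ) = ∑ᵢ ξᵢ ∂f/∂xᵢ` of the differential of `f`
on vector fields, as an `𝒪ₙ`-linear map. -/
def evalD (f : O n) : (Fin n → O n) →ₗ[O n] O n where
  toFun ξ := ∑ i, ξ i * pd i f
  map_add' ξ η := by simp [add_mul, Finset.sum_add_distrib]
  map_smul' c ξ := by simp [Finset.mul_sum, mul_assoc]

/-- The Jacobian ideal `Jh = ⟨∂h/∂x₁, …, ∂h/∂xₙ⟩` of `h ∈ 𝒪ₙ`. -/
def J (h : O n) : Ideal (O n) := Ideal.span (Set.range fun i => pd i h)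

/-- The Milnor number `μ(h) = dim_ℂ 𝒪ₙ/Jh`. -/
def milnor (h : O n) : ℕ := finrank ℂ (O n ⧸ J h)

/-- The ideal `J(f,φ)` generated by the `2×2` minors of the Jacobian matrix of `(f,φ)`. -/
def Jpair (f φ : O n) : Ideal (O n) :=
  Ideal.span {h | ∃ i j, h = pd i f * pd j φ - pd j f * pd i φ}

/-- `Θ_X`: the `𝒪ₙ`-module of vector fields tangent to `X = φ⁻¹(0)`, i.e. those
`ξ ∈ 𝒪ₙⁿ` with `∑ᵢ ξᵢ ∂φ/∂xᵢ ∈ ⟨φ⟩`. -/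
def ThetaX (φ : O n) : Submodule (O n) (Fin n → O n) :=
  Submodule.comap (evalD φ) (Ideal.span {φ})

/-- `Θ_X^T`: the submodule of `Θ_X` generated by the trivial vector fields
`φ ∂/∂xᵢ` and `(∂φ/∂xⱼ) ∂/∂xₖ − (∂φ/∂xₖ) ∂/∂xⱼ` (`j ≠ k`). -/
def ThetaXT (φ : O n) : Submodule (O n) (Fin n → O n) :=
  Submodule.span (O n)
    ({v : Fin n → O n | ∃ i : Fin n, v = Pi.single i φ} ∪
      {v : Fin n → O n | ∃ j k : Fin n, j ≠ k ∧
        v = Pi.single k (pd j φ) - Pi.single j (pd k φ)})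

/-- The ideal `df(Θ_X) = {df(ξ) : ξ ∈ Θ_X}`. -/
def dTheta (f φ : O n) : Ideal (O n) := Submodule.map (evalD f) (ThetaX φ)

/-- The ideal `df(Θ_X^T)`. -/
def dThetaT (f φ : O n) : Ideal (O n) := Submodule.map (evalD f) (ThetaXT φ)

/-- The Bruce–Roberts number `μ_BR(f, X) = dim_ℂ 𝒪ₙ/df(Θ_X)`. -/
def muBR (f φ : O n) : ℕ := finrank ℂ (O n ⧸ dTheta f φ)

/-- The Tjurina number `τ(X,0) = dim_ℂ 𝒪ₙ/(⟨φ⟩ + Jφ)`. -/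
def tjurina (φ : O n) : ℕ := finrank ℂ (O n ⧸ (Ideal.span {φ} ⊔ J φ))

/-- The quotient `A/B` of two ideals of `𝒪ₙ` (with `B ⊆ A` in applications),
as a `ℂ`-vector space. -/
abbrev idealQuot (A B : Ideal (O n)) :=
  (A.restrictScalars ℂ) ⧸
    (Submodule.comap (A.restrictScalars ℂ).subtype (B.restrictScalars ℂ))

/-- The quotient `N/P` of two submodules of `𝒪ₙⁿ` (with `P ⊆ N` in applications),
as a `ℂ`-vector space. -/
abbrev submodQuot (N P : Submodule (O n) (Fin n → O n)) :=
  (N.restrictScalars ℂ) ⧸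
    (Submodule.comap (N.restrictScalars ℂ).subtype (P.restrictScalars ℂ))


/-- For a linear function `p(x) = a₁x₁ + ⋯ + aₙxₙ`, the evaluation
`ξ ↦ dp(ξ) = ∑ᵢ aᵢ ξᵢ` on vector fields, as an `𝒪ₙ`-linear map. -/
def evalL (a : Fin n → ℂ) : (Fin n → O n) →ₗ[O n] O n where
  toFun ξ := ∑ i, algebraMap ℂ (O n) (a i) * ξ i
  map_add' ξ η := by simp [mul_add, Finset.sum_add_distrib]
  map_smul' c ξ := by simp [Finset.mul_sum, mul_left_comm]

/-- The ideal `J(p,φ)` generated by `aᵢ ∂φ/∂xⱼ − aⱼ ∂φ/∂xᵢ`, i.e. by the `2×2`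
minors of the Jacobian matrix of `(p,φ)` for the linear function `p(x) = ∑ aᵢxᵢ`. -/
def Jlin (a : Fin n → ℂ) (φ : O n) : Ideal (O n) :=
  Ideal.span {h | ∃ i j : Fin n,
    h = algebraMap ℂ (O n) (a i) * pd j φ - algebraMap ℂ (O n) (a j) * pd i φ}


section Aux

/-- The key commutative-algebra fact: the exact sequence
`0 → R/(I : g) → R/I → R/(I + (g)) → 0` (where the first map is multiplication by `g`)
gives additivity of `ℂ`-dimensions. -/
lemma key_finrank {R : Type*} [CommRing R] [Algebra ℂ R] (I : Ideal R) (g : R)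
    (h1 : FiniteDimensional ℂ (R ⧸ I.colon (Ideal.span {g})))
    (h2 : FiniteDimensional ℂ (R ⧸ (I ⊔ Ideal.span {g}))) :
    finrank ℂ (R ⧸ I)
      = finrank ℂ (R ⧸ I.colon (Ideal.span {g})) + finrank ℂ (R ⧸ (I ⊔ Ideal.span {g})) := by
  set C := I.colon (Ideal.span {g}) with hC
  have hle : C ≤ Submodule.comap (LinearMap.lsmul R R g) I := by
    intro x hx
    have hx' : x * g ∈ I := Ideal.mem_colon_span_singleton.mp hx
    simpa [LinearMap.lsmul_apply, smul_eq_mul, mul_comm] using hx'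
  set f : (R ⧸ C) →ₗ[R] R ⧸ I := Submodule.mapQ C I (LinearMap.lsmul R R g) hle with hf
  have hfmk : ∀ y : R, f (Submodule.Quotient.mk y) = Submodule.Quotient.mk (g * y) := by
    intro y
    simp only [hf, Submodule.mapQ_apply, LinearMap.lsmul_apply, smul_eq_mul]
  have hinj : Function.Injective f := by
    rw [← LinearMap.ker_eq_bot, eq_bot_iff]
    intro x hx
    obtain ⟨y, rfl⟩ := Submodule.Quotient.mk_surjective _ x
    rw [LinearMap.mem_ker, hfmk, Submodule.Quotient.mk_eq_zero] at hx
    rw [Submodule.mem_bot, Submodule.Quotient.mk_eq_zero]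
    exact Ideal.mem_colon_span_singleton.mpr (by rwa [mul_comm])
  set S : Submodule R (R ⧸ I) := Submodule.map I.mkQ (Ideal.span {g}) with hS
  have hrange : LinearMap.range f = S := by
    ext z
    constructor
    · rintro ⟨x, rfl⟩
      obtain ⟨y, rfl⟩ := Submodule.Quotient.mk_surjective _ x
      rw [hfmk]
      exact ⟨g * y, Ideal.mul_mem_right y _ (Ideal.subset_span rfl), rfl⟩
    · rintro ⟨w, hw, rfl⟩
      obtain ⟨c, rfl⟩ := Ideal.mem_span_singleton'.mp hw
      exact ⟨Submodule.Quotient.mk c, by rw [hfmk, mul_comm]; rfl⟩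
  have e1 : (R ⧸ C) ≃ₗ[R] S :=
    (LinearEquiv.ofInjective f hinj).trans (LinearEquiv.ofEq _ _ hrange)
  have e2 : ((R ⧸ I) ⧸ S) ≃ₗ[R] R ⧸ (I ⊔ Ideal.span {g}) :=
    Submodule.quotientQuotientEquivQuotientSup I (Ideal.span {g})
  -- pass to ℂ-linear equivalences
  have e3 : ↥S ≃ₗ[ℂ] ↥(S.restrictScalars ℂ) :=
    { toFun := fun x => ⟨x.1, x.2⟩
      map_add' := fun _ _ => rfl
      map_smul' := fun _ _ => rfl
      invFun := fun x => ⟨x.1, x.2⟩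
      left_inv := fun _ => rfl
      right_inv := fun _ => rfl }
  have e1c : (R ⧸ C) ≃ₗ[ℂ] ↥(S.restrictScalars ℂ) :=
    (e1.restrictScalars ℂ).trans e3
  have e2c : ((R ⧸ I) ⧸ S.restrictScalars ℂ) ≃ₗ[ℂ] R ⧸ (I ⊔ Ideal.span {g}) :=
    (Submodule.Quotient.restrictScalarsEquiv ℂ S).trans (e2.restrictScalars ℂ)
  have hSfd : FiniteDimensional ℂ ↥(S.restrictScalars ℂ) :=
    Module.Finite.equiv e1c
  have hQfd : FiniteDimensional ℂ ((R ⧸ I) ⧸ S.restrictScalars ℂ) :=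
    Module.Finite.equiv e2c.symm
  have hfd : FiniteDimensional ℂ (R ⧸ I) :=
    IsNoetherian.iff_fg.mp <|
      (isNoetherian_iff_submodule_quotient (S.restrictScalars ℂ)).mpr
        ⟨IsNoetherian.iff_fg.mpr hSfd, IsNoetherian.iff_fg.mpr hQfd⟩
  have := Submodule.finrank_quotient_add_finrank (S.restrictScalars ℂ)
  rw [e2c.finrank_eq, ← e1c.finrank_eq] at this
  omega

variable {n : ℕ}

lemma evalD_single (φ : O n) (j : Fin n) (c : O n) :
    evalD φ (Pi.single j c) = c * pd j φ := by
  simp only [evalD, LinearMap.coe_mk, AddHom.coe_mk]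
  rw [Finset.sum_eq_single j]
  · simp
  · intro i _ hij
    simp [Pi.single_apply, hij]
  · simp

lemma evalL_single (a : Fin n → ℂ) (j : Fin n) (c : O n) :
    evalL a (Pi.single j c) = algebraMap ℂ (O n) (a j) * c := by
  simp only [evalL, LinearMap.coe_mk, AddHom.coe_mk]
  rw [Finset.sum_eq_single j]
  · simp
  · intro i _ hij
    simp [Pi.single_apply, hij]
  · simp

lemma mem_ThetaX (φ : O n) (ξ : Fin n → O n) :
    ξ ∈ ThetaX φ ↔ evalD φ ξ ∈ Ideal.span {φ} := Iff.rfl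

/-- `dp(Θ_X)` is a colon ideal: `dp(Θ_X) = ((φ) + J(p,φ)) : ∂φ/∂xₖ` for any `k`
with `aₖ ≠ 0`. -/
lemma map_evalL_eq_colon (φ : O n) (a : Fin n → ℂ) {k : Fin n} (hk : a k ≠ 0) :
    Submodule.map (evalL a) (ThetaX φ)
      = (Ideal.span {φ} ⊔ Jlin a φ).colon (Ideal.span {pd k φ}) := by
  apply le_antisymm
  · rintro _ ⟨ξ, hξ, rfl⟩
    rw [Ideal.mem_colon_span_singleton]
    have key : evalL a ξ * pd k φ =
        (∑ i, ξ i * (algebraMap ℂ (O n) (a i) * pd k φ - algebraMap ℂ (O n) (a k) * pd i φ))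
          + algebraMap ℂ (O n) (a k) * evalD φ ξ := by
      simp only [evalL, evalD, LinearMap.coe_mk, AddHom.coe_mk]
      rw [Finset.sum_mul, Finset.mul_sum, ← Finset.sum_add_distrib]
      apply Finset.sum_congr rfl
      intro i _
      ring
    rw [key]
    apply Ideal.add_mem
    · apply Ideal.sum_mem
      intro i _
      exact Ideal.mul_mem_left _ _
        (Ideal.mem_sup_right (Ideal.subset_span ⟨i, k, rfl⟩))
    · exact Ideal.mul_mem_left _ _ (Ideal.mem_sup_left ((mem_ThetaX φ ξ).mp hξ))
  · intro r hr
    rw [Ideal.mem_colon_span_singleton] at hr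
    -- every element of `(φ) + J(p,φ)` lies in `(φ) + evalD φ (ker (evalL a))`
    have hQ : Ideal.span {φ} ⊔ Jlin a φ
        ≤ Ideal.span {φ} ⊔ Submodule.map (evalD φ) (LinearMap.ker (evalL a)) := by
      apply sup_le le_sup_left
      rw [Jlin, Ideal.span_le]
      rintro _ ⟨i, j, rfl⟩
      apply Submodule.mem_sup_right
      refine ⟨Pi.single j (algebraMap ℂ (O n) (a i)) - Pi.single i (algebraMap ℂ (O n) (a j)),
        ?_, ?_⟩
      · simp only [SetLike.mem_coe, LinearMap.mem_ker, map_sub, evalL_single]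
        ring
      · rw [map_sub, evalD_single, evalD_single]
    have hr' := hQ hr
    rw [Submodule.mem_sup] at hr'
    obtain ⟨u, hu, v, hv, huv⟩ := hr'
    obtain ⟨η, hη, rfl⟩ := hv
    have hmem : algebraMap ℂ (O n) (a k) * r ∈ Submodule.map (evalL a) (ThetaX φ) := by
      refine ⟨Pi.single k r - η, ?_, ?_⟩
      · simp only [SetLike.mem_coe]
        rw [mem_ThetaX, map_sub, evalD_single]
        have : r * pd k φ - evalD φ η = u := by rw [← huv]; ring
        rw [this]
        exact hu
      · simp only [SetLike.mem_coe, LinearMap.mem_ker] at hη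
        rw [map_sub, evalL_single, hη, sub_zero]
    have : r = algebraMap ℂ (O n) (a k)⁻¹ • (algebraMap ℂ (O n) (a k) * r) := by
      rw [Algebra.smul_def]
      rw [show (algebraMap (O n) (O n)) = RingHom.id (O n) from rfl]
      rw [RingHom.id_apply, ← mul_assoc, ← map_mul, inv_mul_cancel₀ hk, map_one, one_mul]
    rw [this]
    exact Submodule.smul_mem _ _ hmem

/-- `(φ) + Jφ = ((φ) + J(p,φ)) + (∂φ/∂xₖ)` for any `k` with `aₖ ≠ 0`. -/
lemma sup_J_eq (φ : O n) (a : Fin n → ℂ) {k : Fin n} (hk : a k ≠ 0) :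
    Ideal.span {φ} ⊔ J φ = (Ideal.span {φ} ⊔ Jlin a φ) ⊔ Ideal.span {pd k φ} := by
  apply le_antisymm
  · apply sup_le (le_sup_of_le_left le_sup_left)
    rw [J, Ideal.span_le]
    rintro _ ⟨j, rfl⟩
    have hmem : algebraMap ℂ (O n) (a k) * pd j φ
        ∈ (Ideal.span {φ} ⊔ Jlin a φ) ⊔ Ideal.span {pd k φ} := by
      have : algebraMap ℂ (O n) (a k) * pd j φ =
          (algebraMap ℂ (O n) (a k) * pd j φ - algebraMap ℂ (O n) (a j) * pd k φ)
            + algebraMap ℂ (O n) (a j) * pd k φ := by ring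
      rw [this]
      apply Ideal.add_mem
      · exact Submodule.mem_sup_left (Ideal.mem_sup_right (Ideal.subset_span ⟨k, j, rfl⟩))
      · exact Submodule.mem_sup_right (Ideal.mul_mem_left _ _ (Ideal.subset_span rfl))
    have : pd j φ = algebraMap ℂ (O n) (a k)⁻¹ • (algebraMap ℂ (O n) (a k) * pd j φ) := by
      rw [Algebra.smul_def]
      rw [show (algebraMap (O n) (O n)) = RingHom.id (O n) from rfl]
      rw [RingHom.id_apply, ← mul_assoc, ← map_mul, inv_mul_cancel₀ hk, map_one, one_mul]
    show pd j φ ∈ _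
    rw [this]
    exact Submodule.smul_mem _ _ hmem
  · apply sup_le (sup_le le_sup_left _)
    · rw [Ideal.span_le]
      rintro _ ⟨rfl⟩
      exact Submodule.mem_sup_right (Ideal.subset_span ⟨k, rfl⟩)
    · rw [Jlin, Ideal.span_le]
      rintro _ ⟨i, j, rfl⟩
      apply Submodule.mem_sup_right
      exact Ideal.sub_mem _ (Ideal.mul_mem_left _ _ (Ideal.subset_span ⟨j, rfl⟩))
        (Ideal.mul_mem_left _ _ (Ideal.subset_span ⟨i, rfl⟩))

end Aux

/-- Corollary 4.6(1): for a non-zero linear function `p` with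
`μ_BR(p,X) < ∞`, the polar multiplicity `m_{n−1}(X,0) = dim_ℂ 𝒪ₙ/(⟨φ⟩ + J(p,φ))`
satisfies `m_{n−1}(X,0) = μ_BR(p,X) + τ(X,0)`. -/
theorem stmt_12 {n : ℕ} (φ : O n) (hφ0 : value φ = 0)
    (hμφ : FiniteDimensional ℂ (O n ⧸ J φ))
    (a : Fin n → ℂ) (ha : a ≠ 0)
    (hBR : FiniteDimensional ℂ (O n ⧸ Submodule.map (evalL a) (ThetaX φ))) :
    finrank ℂ (O n ⧸ (Ideal.span {φ} ⊔ Jlin a φ))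
      = finrank ℂ (O n ⧸ Submodule.map (evalL a) (ThetaX φ)) + tjurina φ := by
  obtain ⟨k, hk⟩ : ∃ k, a k ≠ 0 := by
    by_contra h
    push_neg at h
    exact ha (funext h)
  have hcolon := map_evalL_eq_colon φ a hk
  have hsupJ := sup_J_eq φ a hk
  -- finiteness of `𝒪/((φ)+Jφ)` from `μ(φ) < ∞`
  have hτfd : FiniteDimensional ℂ
      (O n ⧸ ((Ideal.span {φ} ⊔ Jlin a φ) ⊔ Ideal.span {pd k φ})) := by
    rw [← hsupJ]
    have hle : J φ ≤ Submodule.comap (LinearMap.id : O n →ₗ[O n] O n)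
        (Ideal.span {φ} ⊔ J φ) := fun x hx => le_sup_right (α := Ideal (O n)) hx
    set f : (O n ⧸ J φ) →ₗ[O n] O n ⧸ (Ideal.span {φ} ⊔ J φ) :=
      Submodule.mapQ (J φ) (Ideal.span {φ} ⊔ J φ) LinearMap.id hle with hf
    have hsurj : Function.Surjective (f.restrictScalars ℂ) := by
      intro z
      obtain ⟨y, rfl⟩ := Submodule.Quotient.mk_surjective _ z
      exact ⟨Submodule.Quotient.mk y, by
        simp only [hf, LinearMap.coe_restrictScalars, Submodule.mapQ_apply, LinearMap.id_apply]⟩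
    exact Module.Finite.of_surjective (f.restrictScalars ℂ) hsurj
  have hBR' : FiniteDimensional ℂ
      (O n ⧸ (Ideal.span {φ} ⊔ Jlin a φ).colon (Ideal.span {pd k φ})) := by
    rw [← hcolon]; exact hBR
  have hmain := key_finrank (Ideal.span {φ} ⊔ Jlin a φ) (pd k φ) hBR' hτfd
  rw [hmain, hcolon, tjurina, hsupJ]

end BR

end
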